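/- Let t be an attack–defense tree term over B in which each basic event occurs at most once, let p : B → [0,1], and let (Ω, 𝔽, P) be a probability space carrying a family (E_b)_{b ∈ B(t)} of mutually independent events with P(E_b) = p(b) for each b ∈ B(t). For ω ∈ Ω, let S(ω) = { b ∈ B(t) : ω ∈ E_b }. Then P({ ω : eval_{S(ω)}(t) = tt }) = V_p(t). -/
import Mathlib


/-- Attack–defense tree terms over a type `B` of basic events. -/
inductive ADT (B : Type*) where
  | leaf : B → ADT B
  | and : ADT B → ADT B → ADT B
  | or : ADT B → ADT B → ADT B
  | not : ADT B → ADT B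

namespace ADT

variable {B : Type*} [DecidableEq B]

/-- The finite set `B(t)` of basic events occurring in a term. -/
def events : ADT B → Finset B
  | .leaf b => {b}
  | .and t₁ t₂ => events t₁ ∪ events t₂
  | .or t₁ t₂ => events t₁ ∪ events t₂
  | .not t => events t

/-- Linearity: each basic event occurs at most once in the term. -/
def Linear : ADT B → Prop
  | .leaf _ => True
  | .and t₁ t₂ => Linear t₁ ∧ Linear t₂ ∧ Disjoint (events t₁) (events t₂)
  | .or t₁ t₂ => Linear t₁ ∧ Linear t₂ ∧ Disjoint (events t₁) (events t₂)
  | .not t => Linear t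

/-- Boolean semantics `eval_S(t)` for an assignment `S ⊆ B` (the set of basic
events set to true). -/
def eval (S : Finset B) : ADT B → Bool
  | .leaf b => decide (b ∈ S)
  | .and t₁ t₂ => eval S t₁ && eval S t₂
  | .or t₁ t₂ => eval S t₁ || eval S t₂
  | .not t => !eval S t


/-- The probabilistic bottom-up traversal semantics `V_p(t)`. -/
def Vp (p : B → ℝ) : ADT B → ℝ
  | .leaf b => p b
  | .and t₁ t₂ => Vp p t₁ * Vp p t₂
  | .or t₁ t₂ => Vp p t₁ + Vp p t₂ - Vp p t₁ * Vp p t₂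
  | .not t => 1 - Vp p t

lemma eval_congr {t : ADT B} {S S' : Finset B} (h : ∀ b ∈ t.events, (b ∈ S ↔ b ∈ S')) :
    eval S t = eval S' t := by
  induction t with
  | leaf b => simp only [eval, decide_eq_decide]; exact h b (Finset.mem_singleton_self b)
  | and t₁ t₂ ih₁ ih₂ =>
      simp only [eval]
      rw [ih₁ fun b hb => h b (Finset.mem_union_left _ hb),
        ih₂ fun b hb => h b (Finset.mem_union_right _ hb)]
  | or t₁ t₂ ih₁ ih₂ =>
      simp only [eval]
      rw [ih₁ fun b hb => h b (Finset.mem_union_left _ hb),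
        ih₂ fun b hb => h b (Finset.mem_union_right _ hb)]
  | not t ih => simp only [eval]; rw [ih h]

lemma sum_w (A : Finset B) (p : B → ℝ) :
    ∑ S ∈ A.powerset, (∏ b ∈ S, p b) * ∏ b ∈ A \ S, (1 - p b) = 1 := by
  rw [← Finset.prod_add]
  simp

section
variable {M : Type*} [AddCommMonoid M]

lemma sum_powerset_union {e1 e2 : Finset B}
    (h : Disjoint e1 e2) (f : Finset B → M) :
    ∑ S ∈ (e1 ∪ e2).powerset, f S =
      ∑ S1 ∈ e1.powerset, ∑ S2 ∈ e2.powerset, f (S1 ∪ S2) := by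
  rw [← Finset.sum_product']
  refine Finset.sum_bij' (fun S _ => (S ∩ e1, S ∩ e2))
    (fun x _ => x.1 ∪ x.2) ?_ ?_ ?_ ?_ ?_
  · intro S hS
    simp only [Finset.mem_product, Finset.mem_powerset]
    exact ⟨Finset.inter_subset_right, Finset.inter_subset_right⟩
  · intro x hx
    simp only [Finset.mem_product, Finset.mem_powerset] at hx
    simp only [Finset.mem_powerset]
    exact Finset.union_subset (hx.1.trans Finset.subset_union_left)
      (hx.2.trans Finset.subset_union_right)
  · intro S hS
    simp only [Finset.mem_powerset] at hS
    simp only [← Finset.inter_union_distrib_left]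
    exact Finset.inter_eq_left.2 hS
  · intro x hx
    simp only [Finset.mem_product, Finset.mem_powerset] at hx
    obtain ⟨h1, h2⟩ := hx
    have hd := Finset.disjoint_left.1 h
    ext b <;> simp only [Finset.mem_inter, Finset.mem_union] <;>
      constructor <;> intro hb
    · rcases hb.1 with hb1 | hb1
      · exact hb1
      · exact absurd hb.2 (fun hc => hd hc (h2 hb1))
    · exact ⟨Or.inl hb, h1 hb⟩
    · rcases hb.1 with hb1 | hb1
      · exact absurd (h1 hb1) (fun hc => hd hc hb.2)
      · exact hb1
    · exact ⟨Or.inr hb, h2 hb⟩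
  · intro S hS
    simp only [Finset.mem_powerset] at hS
    congr 1
    simp only [← Finset.inter_union_distrib_left]
    exact (Finset.inter_eq_left.2 hS).symm
end

open scoped Classical in
/-- key factorization facts for union case -/
lemma w_factor {e1 e2 S1 S2 : Finset B} (hd : Disjoint e1 e2)
    (h1 : S1 ⊆ e1) (h2 : S2 ⊆ e2) (p : B → ℝ) :
    (∏ b ∈ S1 ∪ S2, p b) * ∏ b ∈ (e1 ∪ e2) \ (S1 ∪ S2), (1 - p b) =
      ((∏ b ∈ S1, p b) * ∏ b ∈ e1 \ S1, (1 - p b)) *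
        ((∏ b ∈ S2, p b) * ∏ b ∈ e2 \ S2, (1 - p b)) := by
  have hS : Disjoint S1 S2 := hd.mono h1 h2
  have hset : (e1 ∪ e2) \ (S1 ∪ S2) = (e1 \ S1) ∪ (e2 \ S2) := by
    have hd' := Finset.disjoint_left.1 hd
    ext b
    simp only [Finset.mem_sdiff, Finset.mem_union]
    constructor
    · rintro ⟨hb1 | hb1, hb2⟩
      · exact Or.inl ⟨hb1, fun hc => hb2 (Or.inl hc)⟩
      · exact Or.inr ⟨hb1, fun hc => hb2 (Or.inr hc)⟩
    · rintro (⟨hb1, hb2⟩ | ⟨hb1, hb2⟩)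
      · exact ⟨Or.inl hb1, by rintro (hc | hc); exact hb2 hc; exact hd' hb1 (h2 hc)⟩
      · exact ⟨Or.inr hb1, by rintro (hc | hc); exact hd' (h1 hc) hb1; exact hb2 hc⟩
  have hDd : Disjoint (e1 \ S1) (e2 \ S2) :=
    hd.mono (Finset.sdiff_subset) (Finset.sdiff_subset)
  rw [hset, Finset.prod_union hS, Finset.prod_union hDd]
  ring

open scoped Classical in
lemma sum_eval_w (t : ADT B) (hlin : t.Linear) (p : B → ℝ) :
    ∑ S ∈ t.events.powerset,
      (if eval S t then (∏ b ∈ S, p b) * ∏ b ∈ t.events \ S, (1 - p b) else 0) = Vp p t := by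
  induction t with
  | leaf b =>
      rw [show (ADT.leaf b).events = insert b ∅ from rfl,
        Finset.sum_powerset_insert (by simp)]
      simp [eval, Vp, Finset.powerset_empty]
  | and t₁ t₂ ih₁ ih₂ =>
      obtain ⟨l1, l2, hd⟩ := hlin
      rw [show (ADT.and t₁ t₂).events = t₁.events ∪ t₂.events from rfl,
        sum_powerset_union hd]
      have key : ∀ S1 ∈ t₁.events.powerset, ∀ S2 ∈ t₂.events.powerset,
          (if eval (S1 ∪ S2) (ADT.and t₁ t₂) then
            (∏ b ∈ S1 ∪ S2, p b) * ∏ b ∈ (t₁.events ∪ t₂.events) \ (S1 ∪ S2), (1 - p b) else 0)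
          = (if eval S1 t₁ then (∏ b ∈ S1, p b) * ∏ b ∈ t₁.events \ S1, (1 - p b) else 0) *
            (if eval S2 t₂ then (∏ b ∈ S2, p b) * ∏ b ∈ t₂.events \ S2, (1 - p b) else 0) := by
        intro S1 hS1 S2 hS2
        rw [Finset.mem_powerset] at hS1 hS2
        have he1 : eval (S1 ∪ S2) t₁ = eval S1 t₁ := eval_congr fun b hb => by
          simp only [Finset.mem_union]
          exact ⟨fun h => h.resolve_right fun hc => Finset.disjoint_left.1 hd hb (hS2 hc),
            Or.inl⟩
        have he2 : eval (S1 ∪ S2) t₂ = eval S2 t₂ := eval_congr fun b hb => by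
          simp only [Finset.mem_union]
          exact ⟨fun h => h.resolve_left fun hc => Finset.disjoint_right.1 hd hb (hS1 hc),
            Or.inr⟩
        rw [show eval (S1 ∪ S2) (ADT.and t₁ t₂) = (eval (S1 ∪ S2) t₁ && eval (S1 ∪ S2) t₂)
          from rfl, he1, he2, w_factor hd hS1 hS2]
        cases eval S1 t₁ <;> cases eval S2 t₂ <;> simp
      calc ∑ S1 ∈ t₁.events.powerset, ∑ S2 ∈ t₂.events.powerset,
            (if eval (S1 ∪ S2) (ADT.and t₁ t₂) then
              (∏ b ∈ S1 ∪ S2, p b) * ∏ b ∈ (t₁.events ∪ t₂.events) \ (S1 ∪ S2), (1 - p b) else 0)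
          = ∑ S1 ∈ t₁.events.powerset,
              ((if eval S1 t₁ then (∏ b ∈ S1, p b) * ∏ b ∈ t₁.events \ S1, (1 - p b) else 0) *
               ∑ S2 ∈ t₂.events.powerset,
                (if eval S2 t₂ then (∏ b ∈ S2, p b) * ∏ b ∈ t₂.events \ S2, (1 - p b) else 0)) := by
            refine Finset.sum_congr rfl fun S1 hS1 => ?_
            rw [Finset.mul_sum]
            exact Finset.sum_congr rfl fun S2 hS2 => key S1 hS1 S2 hS2
        _ = Vp p t₁ * Vp p t₂ := by
            rw [← Finset.sum_mul, ih₁ l1, ih₂ l2]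
        _ = Vp p (ADT.and t₁ t₂) := rfl
  | or t₁ t₂ ih₁ ih₂ =>
      obtain ⟨l1, l2, hd⟩ := hlin
      rw [show (ADT.or t₁ t₂).events = t₁.events ∪ t₂.events from rfl,
        sum_powerset_union hd]
      -- if (a || b) then w else 0 = w - (if !a then .. )*(if !b then ..)
      have key : ∀ S1 ∈ t₁.events.powerset, ∀ S2 ∈ t₂.events.powerset,
          (if eval (S1 ∪ S2) (ADT.or t₁ t₂) then
            (∏ b ∈ S1 ∪ S2, p b) * ∏ b ∈ (t₁.events ∪ t₂.events) \ (S1 ∪ S2), (1 - p b) else 0)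
          = ((∏ b ∈ S1, p b) * ∏ b ∈ t₁.events \ S1, (1 - p b)) *
              ((∏ b ∈ S2, p b) * ∏ b ∈ t₂.events \ S2, (1 - p b)) -
            (if eval S1 t₁ = false then (∏ b ∈ S1, p b) * ∏ b ∈ t₁.events \ S1, (1 - p b) else 0) *
            (if eval S2 t₂ = false then (∏ b ∈ S2, p b) * ∏ b ∈ t₂.events \ S2, (1 - p b) else 0) := by
        intro S1 hS1 S2 hS2
        rw [Finset.mem_powerset] at hS1 hS2
        have he1 : eval (S1 ∪ S2) t₁ = eval S1 t₁ := eval_congr fun b hb => by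
          simp only [Finset.mem_union]
          exact ⟨fun h => h.resolve_right fun hc => Finset.disjoint_left.1 hd hb (hS2 hc),
            Or.inl⟩
        have he2 : eval (S1 ∪ S2) t₂ = eval S2 t₂ := eval_congr fun b hb => by
          simp only [Finset.mem_union]
          exact ⟨fun h => h.resolve_left fun hc => Finset.disjoint_right.1 hd hb (hS1 hc),
            Or.inr⟩
        rw [show eval (S1 ∪ S2) (ADT.or t₁ t₂) = (eval (S1 ∪ S2) t₁ || eval (S1 ∪ S2) t₂)
          from rfl, he1, he2, w_factor hd hS1 hS2]
        cases eval S1 t₁ <;> cases eval S2 t₂ <;> simp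
      have hneg : ∀ (t' : ADT B), t'.Linear →
          (∑ S ∈ t'.events.powerset, (if eval S t' then (∏ b ∈ S, p b) * ∏ b ∈ t'.events \ S, (1 - p b) else 0)
            = Vp p t') →
          ∑ S ∈ t'.events.powerset,
            (if eval S t' = false then (∏ b ∈ S, p b) * ∏ b ∈ t'.events \ S, (1 - p b) else 0)
            = 1 - Vp p t' := by
        intro t' hl ih
        have : ∀ S ∈ t'.events.powerset,
            (if eval S t' = false then (∏ b ∈ S, p b) * ∏ b ∈ t'.events \ S, (1 - p b) else 0)
            = (∏ b ∈ S, p b) * ∏ b ∈ t'.events \ S, (1 - p b) -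
              (if eval S t' then (∏ b ∈ S, p b) * ∏ b ∈ t'.events \ S, (1 - p b) else 0) := by
          intro S _; cases eval S t' <;> simp
        rw [Finset.sum_congr rfl this, Finset.sum_sub_distrib, sum_w, ih]
      calc ∑ S1 ∈ t₁.events.powerset, ∑ S2 ∈ t₂.events.powerset,
            (if eval (S1 ∪ S2) (ADT.or t₁ t₂) then
              (∏ b ∈ S1 ∪ S2, p b) * ∏ b ∈ (t₁.events ∪ t₂.events) \ (S1 ∪ S2), (1 - p b) else 0)
          = ∑ S1 ∈ t₁.events.powerset, ∑ S2 ∈ t₂.events.powerset,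
              (((∏ b ∈ S1, p b) * ∏ b ∈ t₁.events \ S1, (1 - p b)) *
                ((∏ b ∈ S2, p b) * ∏ b ∈ t₂.events \ S2, (1 - p b)) -
              (if eval S1 t₁ = false then (∏ b ∈ S1, p b) * ∏ b ∈ t₁.events \ S1, (1 - p b) else 0) *
              (if eval S2 t₂ = false then (∏ b ∈ S2, p b) * ∏ b ∈ t₂.events \ S2, (1 - p b) else 0)) :=
            Finset.sum_congr rfl fun S1 hS1 => Finset.sum_congr rfl fun S2 hS2 => key S1 hS1 S2 hS2
        _ = 1 * 1 - (1 - Vp p t₁) * (1 - Vp p t₂) := by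
            have inner : ∀ S1 ∈ t₁.events.powerset,
                ∑ S2 ∈ t₂.events.powerset,
                  (((∏ b ∈ S1, p b) * ∏ b ∈ t₁.events \ S1, (1 - p b)) *
                    ((∏ b ∈ S2, p b) * ∏ b ∈ t₂.events \ S2, (1 - p b)) -
                  (if eval S1 t₁ = false then (∏ b ∈ S1, p b) * ∏ b ∈ t₁.events \ S1, (1 - p b) else 0) *
                  (if eval S2 t₂ = false then (∏ b ∈ S2, p b) * ∏ b ∈ t₂.events \ S2, (1 - p b) else 0))
                = ((∏ b ∈ S1, p b) * ∏ b ∈ t₁.events \ S1, (1 - p b)) * 1 -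
                  (if eval S1 t₁ = false then (∏ b ∈ S1, p b) * ∏ b ∈ t₁.events \ S1, (1 - p b) else 0) *
                    (1 - Vp p t₂) := by
              intro S1 _
              rw [Finset.sum_sub_distrib, ← Finset.mul_sum, ← Finset.mul_sum,
                sum_w, hneg t₂ l2 (ih₂ l2)]
            rw [Finset.sum_congr rfl inner, Finset.sum_sub_distrib, ← Finset.sum_mul,
              ← Finset.sum_mul, sum_w, hneg t₁ l1 (ih₁ l1)]
        _ = Vp p (ADT.or t₁ t₂) := by rw [show Vp p (ADT.or t₁ t₂) = Vp p t₁ + Vp p t₂ - Vp p t₁ * Vp p t₂ from rfl]; ring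
  | not t ih =>
      have hl : t.Linear := hlin
      have : ∀ S ∈ t.events.powerset,
          (if eval S (ADT.not t) then (∏ b ∈ S, p b) * ∏ b ∈ t.events \ S, (1 - p b) else 0)
          = (∏ b ∈ S, p b) * ∏ b ∈ t.events \ S, (1 - p b) -
            (if eval S t then (∏ b ∈ S, p b) * ∏ b ∈ t.events \ S, (1 - p b) else 0) := by
        intro S _
        rw [show eval S (ADT.not t) = !eval S t from rfl]
        cases eval S t <;> simp
      rw [show (ADT.not t).events = t.events from rfl, Finset.sum_congr rfl this,
        Finset.sum_sub_distrib, sum_w, ih hl]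
      rfl



open MeasureTheory ProbabilityTheory in
open scoped Classical in
/-- if the basic events of a linear term succeed mutually
independently, the basic event `b` succeeding with probability `p b` (as the
event `E b`), then the probability that the induced random assignment
`S(ω) = { b ∈ B(t) : ω ∈ E b }` satisfies the term equals the bottom-up
probability `V_p(t)`. -/
theorem measure_sat_eq_Vp {Ω : Type*} [MeasurableSpace Ω] (μ : Measure Ω)
    [IsProbabilityMeasure μ] (t : ADT B) (hlin : t.Linear) (p : B → ℝ)
    (hp : ∀ b, p b ∈ Set.Icc (0 : ℝ) 1) (E : B → Set Ω)
    (hmeas : ∀ b ∈ t.events, MeasurableSet (E b))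
    (hindep : iIndepSet (fun b : {b // b ∈ t.events} => E b) μ)
    (hprob : ∀ b ∈ t.events, μ (E b) = ENNReal.ofReal (p b)) :
    μ {ω | t.eval (t.events.filter (fun b => ω ∈ E b)) = true} =
      ENNReal.ofReal (Vp p t) := by
  set A := t.events with hA
  set atom : Finset B → Set Ω := fun S => {ω | A.filter (fun b => ω ∈ E b) = S} with hatomdef
  -- atoms as intersections
  have hatom : ∀ S : Finset B, S ⊆ A →
      atom S = ⋂ b : {b // b ∈ A}, (if ↑b ∈ S then E ↑b else (E ↑b)ᶜ) := by
    intro S hS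
    ext ω
    simp only [hatomdef, Set.mem_setOf_eq, Set.mem_iInter]
    constructor
    · intro h b
      by_cases hb : ↑b ∈ S
      · rw [if_pos hb]
        rw [← h] at hb
        exact (Finset.mem_filter.1 hb).2
      · rw [if_neg hb]
        intro hc
        exact hb (h ▸ Finset.mem_filter.2 ⟨b.2, hc⟩)
    · intro h
      ext a
      simp only [Finset.mem_filter]
      constructor
      · rintro ⟨ha, hωa⟩
        have := h ⟨a, ha⟩
        by_cases haS : a ∈ S
        · exact haS
        · rw [if_neg haS] at this; exact absurd hωa this
      · intro haS
        refine ⟨hS haS, ?_⟩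
        have := h ⟨a, hS haS⟩
        rwa [if_pos haS] at this
  have hatom_meas : ∀ S : Finset B, S ⊆ A → MeasurableSet (atom S) := by
    intro S hS
    rw [hatom S hS]
    refine MeasurableSet.iInter fun b => ?_
    by_cases hb : ↑b ∈ S
    · rw [if_pos hb]; exact hmeas b b.2
    · rw [if_neg hb]; exact (hmeas b b.2).compl
  -- the union decomposition
  have hunion : {ω | t.eval (A.filter (fun b => ω ∈ E b)) = true} =
      ⋃ S ∈ A.powerset.filter (fun S => eval S t), atom S := by
    ext ω
    simp only [Set.mem_setOf_eq, Set.mem_iUnion, Finset.mem_filter, Finset.mem_powerset,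
      hatomdef, Set.mem_setOf_eq]
    constructor
    · intro h
      exact ⟨A.filter (fun b => ω ∈ E b), ⟨Finset.filter_subset _ _, h⟩, rfl⟩
    · rintro ⟨S, ⟨-, hev⟩, rfl⟩
      exact hev
  -- atom measure
  have hindep' := (iIndepSet_iff_iIndep _ μ).1 hindep
  have hatom_measure : ∀ S : Finset B, S ⊆ A →
      μ (atom S) = (∏ b ∈ A \ S, ENNReal.ofReal (1 - p b)) * ∏ b ∈ S, ENNReal.ofReal (p b) := by
    intro S hS
    rw [hatom S hS]
    rw [hindep'.meas_iInter (fun b => ?_)]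
    · have : ∀ b : {b // b ∈ A}, μ (if ↑b ∈ S then E ↑b else (E ↑b)ᶜ) =
          (fun b => if b ∈ S then ENNReal.ofReal (p b) else ENNReal.ofReal (1 - p b)) ↑b := by
        intro b
        by_cases hb : ↑b ∈ S
        · simp only [if_pos hb]; exact hprob b b.2
        · simp only [if_neg hb]
          rw [measure_compl (hmeas b b.2) (measure_ne_top μ _), hprob b b.2,
            measure_univ, ENNReal.ofReal_sub _ (hp ↑b).1, ENNReal.ofReal_one]
      rw [Finset.prod_congr rfl fun b _ => this b, Finset.univ_eq_attach,
        Finset.prod_attach A (fun b => if b ∈ S then ENNReal.ofReal (p b)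
          else ENNReal.ofReal (1 - p b)), ← Finset.prod_sdiff hS]
      congr 1
      · exact Finset.prod_congr rfl fun b hb => if_neg (Finset.mem_sdiff.1 hb).2
      · exact Finset.prod_congr rfl fun b hb => if_pos hb
    · by_cases hb : ↑b ∈ S
      · rw [if_pos hb]
        exact MeasurableSpace.measurableSet_generateFrom (Set.mem_singleton _)
      · rw [if_neg hb]
        exact (MeasurableSpace.measurableSet_generateFrom (Set.mem_singleton _)).compl
  -- disjointness
  have hdisj : (↑(A.powerset.filter (fun S => eval S t)) : Set (Finset B)).PairwiseDisjoint atom := by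
    intro S hS S' hS' hne
    refine Set.disjoint_left.2 fun ω hω hω' => hne ?_
    simp only [hatomdef, Set.mem_setOf_eq] at hω hω'
    rw [← hω, ← hω']
  rw [hunion, measure_biUnion_finset hdisj fun S hS =>
    hatom_meas S (Finset.mem_powerset.1 (Finset.mem_filter.1 hS).1)]
  have hterm : ∀ S ∈ A.powerset.filter (fun S => eval S t),
      μ (atom S) = ENNReal.ofReal ((∏ b ∈ S, p b) * ∏ b ∈ A \ S, (1 - p b)) := by
    intro S hS
    have hSA : S ⊆ A := Finset.mem_powerset.1 (Finset.mem_filter.1 hS).1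
    rw [hatom_measure S hSA, ENNReal.ofReal_mul (Finset.prod_nonneg fun b _ => (hp b).1),
      ENNReal.ofReal_prod_of_nonneg (fun b _ => (hp b).1),
      ENNReal.ofReal_prod_of_nonneg (fun b _ => by linarith [(hp b).2])]
    ring
  rw [Finset.sum_congr rfl hterm,
    ← ENNReal.ofReal_sum_of_nonneg (fun S _ => mul_nonneg
      (Finset.prod_nonneg fun b _ => (hp b).1)
      (Finset.prod_nonneg fun b _ => by linarith [(hp b).2]))]
  congr 1
  rw [Finset.sum_filter]
  exact sum_eval_w t hlin p



end ADT
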